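/- arXiv:2306.14869 — 2 statements merged into one kernel-verified Lean document; each statement's English description precedes it below -/
import Mathlib

section
/- Let u, w : ℤ → ℂ satisfy w(n)² = 1 + u(n)², u(n) ≠ 0 and w(n) ≠ 0 for all n, and let λ ∈ ℂ, λ ≠ 0. For fixed n let V(λ) be the Lax matrix at site n, and let V̂(λ) be the matrix obtained from V(λ) by replacing every occurrence of u(n+k) by u(n−k) and every w(n+k) by w(n−k) (k ∈ ℤ). Then V(λ) = − J · V̂(λ⁻¹) · J, where J is the 3×3 exchange matrix with rows (0,0,1), (0,1,0), (1,0,0). -/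
/-- The Lax matrix `V(λ)` at site `n` for sequences `u w : ℤ → ℂ`. -/
noncomputable def laxV (u w : ℤ → ℂ) (lam : ℂ) (n : ℤ) : Matrix (Fin 3) (Fin 3) ℂ :=
  !![lam + u (n+2) * w (n+1) / u n, -(u n * u (n+1)),
      -(w n + lam * u (n+2) * w n * w (n+1) / u n);
    u (n+1) * w n^2 / u n + u (n-1) * w n / (lam * u n),
      lam - 1/lam,
      -(u (n-1) * w n^2 / u n + lam * u (n+1) * w n / u n);
    w n + u (n-2) * w n * w (n-1) / (lam * u n),
      u n * u (n-1),
      -(1/lam + u (n-2) * w (n-1) / u n)]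

/-- The 3×3 exchange (backward identity) matrix. -/
def exchangeJ : Matrix (Fin 3) (Fin 3) ℂ := !![0, 0, 1; 0, 1, 0; 1, 0, 0]

/-- Reduction-group symmetry of the Lax matrix `V(λ)`:
`V(λ) = − J · V̂(λ⁻¹) · J`, where `V̂` is obtained from `V` by the reflection
`u(n+k) ↦ u(n−k)`, `w(n+k) ↦ w(n−k)`. -/
theorem laxV_reduction_symmetry (u w : ℤ → ℂ)
    (hw2 : ∀ n : ℤ, (w n)^2 = 1 + (u n)^2)
    (hu0 : ∀ n : ℤ, u n ≠ 0) (hw0 : ∀ n : ℤ, w n ≠ 0)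
    (lam : ℂ) (hlam : lam ≠ 0) (n : ℤ) :
    laxV u w lam n
      = -(exchangeJ * laxV (fun m => u (2*n - m)) (fun m => w (2*n - m)) lam⁻¹ n
            * exchangeJ) := by
  unfold laxV exchangeJ
  have h1 : (2*n - (n+2)) = n - 2 := by ring
  have h2 : (2*n - (n+1)) = n - 1 := by ring
  have h3 : (2*n - n) = n := by ring
  have h4 : (2*n - (n-1)) = n + 1 := by ring
  have h5 : (2*n - (n-2)) = n + 2 := by ring
  ext i j
  fin_cases i <;> fin_cases j <;>
    simp [Matrix.mul_apply, Fin.sum_univ_succ, h1, h2, h3, h4, h5] <;>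
    field_simp <;> ring
end

section
/- Let u, w : ℤ → ℂ satisfy w(n)² = 1 + u(n)², u(n) ≠ 0 and w(n) ≠ 0 for all n, and let λ ∈ ℂ, λ ≠ 0. For fixed n let Û(λ) be the matrix obtained from the Lax matrix U(λ) at site n by replacing every occurrence of u(n+k) by u(n−k) and every w(n+k) by w(n−k) (k ∈ ℤ). Then J · Û(λ⁻¹) · J is a two-sided inverse of the Lax matrix U(λ) evaluated at site n−1; i.e. ( J · Û(λ⁻¹) · J ) · U(λ)|_{n−1} = I = U(λ)|_{n−1} · ( J · Û(λ⁻¹) · J ), where J is the 3×3 exchange matrix with rows (0,0,1), (0,1,0), (1,0,0). -/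
set_option maxHeartbeats 1000000


/-- The Lax matrix `U(λ)` at site `n` for sequences `u w : ℤ → ℂ`. -/
noncomputable def laxU (u w : ℤ → ℂ) (lam : ℂ) (n : ℤ) : Matrix (Fin 3) (Fin 3) ℂ :=
  !![u (n+1) / (u n * w (n+1)), lam / w (n+1), -lam * u (n+1) * w n / (u n * w (n+1));
    1, 0, 0;
    0, 1, 0]

/-- Reduction-group symmetry of the Lax matrix `U(λ)`:
`J · Û(λ⁻¹) · J` is a two-sided inverse of `U(λ)` evaluated at site `n−1`, where `Û`
is obtained from `U` by the reflection `u(n+k) ↦ u(n−k)`, `w(n+k) ↦ w(n−k)`. -/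
theorem laxU_reduction_symmetry (u w : ℤ → ℂ)
    (hw2 : ∀ n : ℤ, (w n)^2 = 1 + (u n)^2)
    (hu0 : ∀ n : ℤ, u n ≠ 0) (hw0 : ∀ n : ℤ, w n ≠ 0)
    (lam : ℂ) (hlam : lam ≠ 0) (n : ℤ) :
    (exchangeJ * laxU (fun m => u (2*n - m)) (fun m => w (2*n - m)) lam⁻¹ n * exchangeJ)
        * laxU u w lam (n - 1) = 1
      ∧ laxU u w lam (n - 1)
          * (exchangeJ * laxU (fun m => u (2*n - m)) (fun m => w (2*n - m)) lam⁻¹ n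
              * exchangeJ) = 1 := by
  have e1 : (2*n - (n+1)) = n - 1 := by ring
  have e2 : (2*n - n) = n := by ring
  have h1 : n - 1 + 1 = n := by ring
  have hun := hu0 n; have hun1 := hu0 (n-1)
  have hwn := hw0 n; have hwn1 := hw0 (n-1)
  constructor <;>
  · ext i j
    fin_cases i <;> fin_cases j <;>
      simp [laxU, exchangeJ, Matrix.mul_apply, Fin.sum_univ_succ, e1, e2, h1,
        Matrix.one_apply]
    all_goals field_simp
    all_goals ring
end
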